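/- arXiv:2509.18784 — 2 statements merged into one kernel-verified Lean document; each statement's English description precedes it below -/
import Mathlib

section
/- If G is a strongly 2-monophonic graph and x,y are vertices with N(y) ⊆ N(x), then N[x] = V(G) \ {y}. -/
open SimpleGraph

variable {V : Type*}

/-- A walk is an induced path if it is a path and every edge of the graph between
vertices of the walk is an edge of the walk. -/
def IsInducedPath (G : SimpleGraph V) {u v : V} (p : G.Walk u v) : Prop :=
  p.IsPath ∧ ∀ a b : V, a ∈ p.support → b ∈ p.support → G.Adj a b → p.toSubgraph.Adj a b

/-- The monophonic interval: all vertices lying on some induced `u,v`-path. -/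
def monoInterval (G : SimpleGraph V) (u v : V) : Set V :=
  {w | ∃ p : G.Walk u v, IsInducedPath G p ∧ w ∈ p.support}

/-- A set `S` is monophonic if every vertex lies in the monophonic interval
of some pair of vertices of `S`. -/
def IsMonophonicSet (G : SimpleGraph V) (S : Set V) : Prop :=
  ∀ w : V, ∃ x ∈ S, ∃ y ∈ S, w ∈ monoInterval G x y

/-- The monophonic number: least cardinality of a monophonic set. -/
noncomputable def monophonicNumber (G : SimpleGraph V) : ℕ :=
  sInf {n : ℕ | ∃ S : Finset V, S.card = n ∧ IsMonophonicSet G (S : Set V)}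

/-- A graph is strongly 2-monophonic if every pair of non-adjacent vertices is
a monophonic set. -/
def Strongly2Monophonic (G : SimpleGraph V) : Prop :=
  ∀ x y : V, x ≠ y → ¬ G.Adj x y → IsMonophonicSet G {x, y}

/-- A closed walk is an induced cycle if it is a cycle and every edge of the graph
between vertices of the walk is an edge of the walk. -/
def IsInducedCycle (G : SimpleGraph V) {a : V} (w : G.Walk a a) : Prop :=
  w.IsCycle ∧ ∀ u v : V, u ∈ w.support → v ∈ w.support → G.Adj u v → w.toSubgraph.Adj u v

/-- The Kneser graph `K(n,r)`: vertices are `r`-subsets of `[n]`, adjacent iff disjoint. -/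
def kneser (n r : ℕ) : SimpleGraph {s : Finset (Fin n) // s.card = r} where
  Adj a b := a ≠ b ∧ Disjoint a.1 b.1
  symm := ⟨fun _ _ h => ⟨h.1.symm, h.2.symm⟩⟩
  loopless := ⟨fun _ h => h.1 rfl⟩

/-- The Johnson graph `J(n,r)`: vertices are `r`-subsets of `[n]`, adjacent iff the
intersection has `r-1` elements. -/
def johnson (n r : ℕ) : SimpleGraph {s : Finset (Fin n) // s.card = r} where
  Adj a b := a ≠ b ∧ (a.1 ∩ b.1).card = r - 1
  symm := ⟨fun _ _ h => ⟨h.1.symm, by rw [Finset.inter_comm]; exact h.2⟩⟩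
  loopless := ⟨fun _ h => h.1 rfl⟩



/-!
Since `N(y) ⊆ N(x)` and `G` has no loops, `x` and `y` are non-adjacent, so `{x, y}` is a monophonic
set. An induced path from a vertex to itself is trivial, and on an induced `x,y`-path the
penultimate vertex is a neighbour of `y`, hence of `x`; the path has no chords, so that vertex is
the second one and the path is `x z y`. Thus every vertex other than `y` is `x` or a neighbour of `x`.
-/

namespace IsInducedPath

variable {G : SimpleGraph V} {u v : V} {p : G.Walk u v}

lemma reverse (hp : IsInducedPath G p) : IsInducedPath G p.reverse := by
  refine ⟨hp.1.reverse, fun a b ha hb hab => ?_⟩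
  rw [Walk.support_reverse, List.mem_reverse] at ha hb
  rw [Walk.toSubgraph_reverse]
  exact hp.2 a b ha hb hab

lemma nil {p : G.Walk u u} (hp : IsInducedPath G p) : p.Nil :=
  Walk.isPath_iff_nil.mp hp.1

lemma succ_eq_or_eq_succ_of_adj_getVert (hp : IsInducedPath G p) {i j : ℕ} (hi : i ≤ p.length)
    (hj : j ≤ p.length) (hadj : G.Adj (p.getVert i) (p.getVert j)) : i + 1 = j ∨ j + 1 = i := by
  obtain ⟨k, hk, hklt⟩ := (Walk.toSubgraph_adj_iff p).mp
    (hp.2 _ _ (p.getVert_mem_support i) (p.getVert_mem_support j) hadj)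
  have inj := hp.1.getVert_injOn
  rcases Sym2.eq_iff.mp hk with ⟨hki, hkj⟩ | ⟨hkj, hki⟩
  · left
    rw [← inj (by simp; omega) (by simpa using hi) hki]
    exact inj (by simp; omega) (by simpa using hj) hkj
  · right
    rw [← inj (by simp; omega) (by simpa using hj) hkj]
    exact inj (by simp; omega) (by simpa using hi) hki

lemma length_eq_two_of_neighborSet_subset (hp : IsInducedPath G p) (huv : u ≠ v)
    (hN : G.neighborSet v ⊆ G.neighborSet u) : p.length = 2 := by
  have hlen : p.length ≠ 0 := fun h => huv (Walk.eq_of_length_eq_zero h)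
  have hpen : G.Adj (p.getVert (p.length - 1)) v := by
    simpa [Nat.sub_add_cancel (Nat.one_le_iff_ne_zero.mpr hlen)] using
      p.adj_getVert_succ (i := p.length - 1) (by omega)
  have hchord : G.Adj (p.getVert 0) (p.getVert (p.length - 1)) := by
    simpa using hN hpen.symm
  have := hp.succ_eq_or_eq_succ_of_adj_getVert (by omega) (by omega) hchord
  omega

lemma mem_support_of_neighborSet_subset (hp : IsInducedPath G p) (huv : u ≠ v)
    (hN : G.neighborSet v ⊆ G.neighborSet u) {w : V} (hw : w ∈ p.support) :
    w = u ∨ G.Adj u w ∨ w = v := by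
  have hlen := hp.length_eq_two_of_neighborSet_subset huv hN
  obtain ⟨i, rfl, hi⟩ := Walk.mem_support_iff_exists_getVert.mp hw
  rw [hlen] at hi
  interval_cases i
  · simp
  · simpa using Or.inr (Or.inl (p.adj_getVert_succ (i := 0) (by omega)))
  · simp [← hlen]

end IsInducedPath

section

variable {G : SimpleGraph V}

lemma monoInterval_self (u : V) : monoInterval G u u = {u} := by
  ext w
  constructor
  · rintro ⟨p, hp, hw⟩
    simpa [Walk.nil_iff_support_eq.mp hp.nil] using hw
  · rintro rfl
    exact ⟨.nil, ⟨Walk.IsPath.nil, by simp⟩, by simp⟩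

lemma monoInterval_comm (u v : V) : monoInterval G u v = monoInterval G v u := by
  suffices ∀ u v : V, monoInterval G u v ⊆ monoInterval G v u from (this u v).antisymm (this v u)
  rintro u v w ⟨p, hp, hw⟩
  exact ⟨p.reverse, hp.reverse, by simpa using hw⟩

lemma monoInterval_subset_of_neighborSet_subset {u v : V} (huv : u ≠ v)
    (hN : G.neighborSet v ⊆ G.neighborSet u) :
    monoInterval G u v ⊆ insert u (insert v (G.neighborSet u)) := by
  rintro w ⟨p, hp, hw⟩
  rcases hp.mem_support_of_neighborSet_subset huv hN hw with h | h | h <;> simp [h]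

end

theorem stmt10 {V : Type*} (G : SimpleGraph V) (h : Strongly2Monophonic G)
    (x y : V) (hxy : x ≠ y) (hN : G.neighborSet y ⊆ G.neighborSet x) :
    G.neighborSet x ∪ {x} = Set.univ \ {y} := by
  have hnadj : ¬ G.Adj x y := fun hadj => G.loopless.irrefl x (hN hadj.symm)
  ext w
  simp only [Set.mem_union, mem_neighborSet, Set.mem_singleton_iff, Set.mem_sdiff, Set.mem_univ,
    true_and]
  refine ⟨?_, fun hwy => ?_⟩
  · rintro (hw | rfl)
    · rintro rfl
      exact hnadj hw
    · exact hxy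
  obtain ⟨a, ha, b, hb, hw⟩ := h x y hxy hnadj w
  have hw' : w ∈ insert x (insert y (G.neighborSet x)) := by
    rcases ha with rfl | rfl <;> rcases hb with rfl | rfl
    · simp_all [monoInterval_self]
    · exact monoInterval_subset_of_neighborSet_subset hxy hN hw
    · exact monoInterval_subset_of_neighborSet_subset hxy hN (monoInterval_comm _ _ ▸ hw)
    · simp_all [monoInterval_self]
  simp only [Set.mem_insert_iff, mem_neighborSet] at hw'
  tauto
end

section
/- Let G be a non-complete graph with the property that for any three vertices, one of which is non-adjacent to the other two, there is an induced cycle passing through all three. Then G is strongly 2-monophonic. -/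
open SimpleGraph

variable {V : Type*}

/-!
Let `x, y` be non-adjacent and `w` any third vertex. If `w` is adjacent to both, then
`x - w - y` is an induced path. Otherwise one of `x, y` is non-adjacent to the other two, so
some induced cycle passes through `x`, `y` and `w`. Cutting that cycle at `x` and `y` gives
two `x,y`-paths covering it, and each of them is induced: a chord of one arc would be an edge of
the other arc, and the two arcs share only `x` and `y`, which are not adjacent.
-/

namespace SimpleGraph.Walk

variable {G : SimpleGraph V} {u v z : V}

lemma IsCycle.eq_or_eq_of_mem_support_append {p : G.Walk u v} {q : G.Walk v u}
    (hc : (p.append q).IsCycle) (hzp : z ∈ p.support) (hzq : z ∈ q.support) :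
    z = u ∨ z = v := by
  have hdisj := (List.nodup_append'.mp (tail_support_append p q ▸ hc.support_nodup)).2.2
  rw [← cons_tail_support] at hzp hzq
  rcases List.mem_cons.mp hzp with rfl | hzp
  · exact .inl rfl
  rcases List.mem_cons.mp hzq with rfl | hzq
  · exact .inr rfl
  exact (hdisj hzp hzq).elim

end SimpleGraph.Walk

section

variable {G : SimpleGraph V} {u v w : V}

lemma isInducedPath_nil (u : V) : IsInducedPath G (Walk.nil : G.Walk u u) :=
  ⟨.nil, fun a b ha hb hab => by simp_all⟩

lemma mem_monoInterval_self (u : V) : u ∈ monoInterval G u u :=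
  ⟨.nil, isInducedPath_nil u, Walk.start_mem_support _⟩

lemma isInducedPath_cons_cons_nil (huw : G.Adj u w) (hwv : G.Adj w v) (huv : u ≠ v)
    (hnadj : ¬ G.Adj u v) : IsInducedPath G (.cons huw (.cons hwv .nil)) := by
  refine ⟨by simp [huw.ne, hwv.ne, huv], fun a b ha hb hab => ?_⟩
  simp only [Walk.support_cons, Walk.support_nil, List.mem_cons, List.not_mem_nil,
    or_false] at ha hb
  rcases ha with rfl | rfl | rfl <;> rcases hb with rfl | rfl | rfl <;>
    simp_all [hab.ne, Sym2.eq_swap, adj_comm]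

lemma mem_monoInterval_of_adj_of_adj (huw : G.Adj u w) (hwv : G.Adj w v) (huv : u ≠ v)
    (hnadj : ¬ G.Adj u v) : w ∈ monoInterval G u v :=
  ⟨_, isInducedPath_cons_cons_nil huw hwv huv hnadj, by simp⟩

namespace IsInducedCycle

lemma rotate [DecidableEq V] {c : G.Walk v v} (hc : IsInducedCycle G c) (hu : u ∈ c.support) :
    IsInducedCycle G (c.rotate u hu) :=
  ⟨hc.1.rotate hu, by simpa only [Walk.mem_support_rotate_iff, Walk.toSubgraph_rotate] using hc.2⟩

lemma reverse {c : G.Walk v v} (hc : IsInducedCycle G c) : IsInducedCycle G c.reverse :=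
  ⟨hc.1.reverse, by simpa only [Walk.support_reverse, List.mem_reverse,
    Walk.toSubgraph_reverse] using hc.2⟩

lemma isInducedPath_of_append {p : G.Walk u v} {q : G.Walk v u}
    (hc : IsInducedCycle G (p.append q)) (huv : u ≠ v) (hnadj : ¬ G.Adj u v) :
    IsInducedPath G p := by
  refine ⟨hc.1.isPath_of_append_left (Walk.not_nil_of_ne huv.symm), fun a b ha hb hab => ?_⟩
  have hadj := hc.2 a b (by simp [ha]) (by simp [hb]) hab
  rw [Walk.toSubgraph_append, Subgraph.sup_adj] at hadj
  refine hadj.resolve_right fun hq => ?_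
  have ha' := hc.1.eq_or_eq_of_mem_support_append ha (Walk.mem_support_of_adj_toSubgraph hq)
  have hb' := hc.1.eq_or_eq_of_mem_support_append hb (Walk.mem_support_of_adj_toSubgraph hq.symm)
  rcases ha' with rfl | rfl <;> rcases hb' with rfl | rfl
  exacts [hab.ne rfl, hnadj hab, hnadj hab.symm, hab.ne rfl]

lemma mem_monoInterval {c : G.Walk z z} (hc : IsInducedCycle G c) {x y : V}
    (hxy : x ≠ y) (hnadj : ¬ G.Adj x y) (hx : x ∈ c.support) (hy : y ∈ c.support)
    (hw : w ∈ c.support) : w ∈ monoInterval G x y := by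
  classical
  have hy' : y ∈ (c.rotate x hx).support := (c.mem_support_rotate_iff x hx).mpr hy
  have hc' := hc.rotate hx
  rw [← Walk.take_spec _ hy'] at hc'
  rw [← c.mem_support_rotate_iff x hx, ← Walk.take_spec _ hy', Walk.mem_support_append_iff] at hw
  rcases hw with hw | hw
  · exact ⟨_, hc'.isInducedPath_of_append hxy hnadj, hw⟩
  · have hrev := hc'.reverse
    rw [Walk.reverse_append] at hrev
    exact ⟨_, hrev.isInducedPath_of_append hxy hnadj, by simpa using hw⟩

end IsInducedCycle

end

theorem stmt12_general {V : Type*} (G : SimpleGraph V)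
    (hcyc : ∀ x y z : V, x ≠ y → x ≠ z → y ≠ z → ¬ G.Adj x y → ¬ G.Adj x z →
      ∃ (a : V) (w : G.Walk a a), IsInducedCycle G w ∧
        x ∈ w.support ∧ y ∈ w.support ∧ z ∈ w.support) :
    Strongly2Monophonic G := by
  intro x y hxy hnadj w
  by_cases hwx : w = x
  · exact ⟨x, .inl rfl, x, .inl rfl, hwx ▸ mem_monoInterval_self w⟩
  by_cases hwy : w = y
  · exact ⟨y, .inr rfl, y, .inr rfl, hwy ▸ mem_monoInterval_self w⟩
  refine ⟨x, .inl rfl, y, .inr rfl, ?_⟩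
  by_cases hxw : G.Adj x w
  · by_cases hyw : G.Adj y w
    · exact mem_monoInterval_of_adj_of_adj hxw hyw.symm hxy hnadj
    obtain ⟨_, c, hc, hyc, hxc, hwc⟩ :=
      hcyc y x w (Ne.symm hxy) (Ne.symm hwy) (Ne.symm hwx) (hnadj ∘ G.adj_symm) hyw
    exact hc.mem_monoInterval hxy hnadj hxc hyc hwc
  obtain ⟨_, c, hc, hxc, hyc, hwc⟩ := hcyc x y w hxy (Ne.symm hwx) (Ne.symm hwy) hnadj hxw
  exact hc.mem_monoInterval hxy hnadj hxc hyc hwc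

theorem stmt12 {V : Type*} (G : SimpleGraph V)
    (hnc : ∃ a b : V, a ≠ b ∧ ¬ G.Adj a b)
    (hcyc : ∀ x y z : V, x ≠ y → x ≠ z → y ≠ z → ¬ G.Adj x y → ¬ G.Adj x z →
      ∃ (a : V) (w : G.Walk a a), IsInducedCycle G w ∧
        x ∈ w.support ∧ y ∈ w.support ∧ z ∈ w.support) :
    Strongly2Monophonic G :=
  stmt12_general G hcyc
end
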